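/- If p satisfies the cluster expansion condition p_i ≤ y_i / Y_{Γ⁺(i)} for positive reals y_1,...,y_n, then the Shearer coefficients satisfy q̆_S / q̆_{S∖{a}} ≥ Y_{S^c} / Y_{(S∖{a})^c} for all a ∈ S ⊆ [n] (in particular q̆_S > 0 for all S). -/

import Mathlib

open Finset MeasureTheory

/-- `I` is an independent set of `G`. -/
def Indep {n : ℕ} (G : SimpleGraph (Fin n)) (I : Finset (Fin n)) : Prop :=
  ∀ i ∈ I, ∀ j ∈ I, ¬ G.Adj i j

instance {n : ℕ} (G : SimpleGraph (Fin n)) [DecidableRel G.Adj] (I : Finset (Fin n)) :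
    Decidable (Indep G I) := by unfold Indep; infer_instance

/-- Closed neighborhood `Γ⁺(a)`. -/
def Gp {n : ℕ} (G : SimpleGraph (Fin n)) [DecidableRel G.Adj] (a : Fin n) : Finset (Fin n) :=
  insert a (G.neighborFinset a)

/-- Shearer coefficient `q̆_S`. -/
def qb {n : ℕ} (G : SimpleGraph (Fin n)) [DecidableRel G.Adj] (p : Fin n → ℝ)
    (S : Finset (Fin n)) : ℝ :=
  ∑ I ∈ S.powerset.filter (fun I => Indep G I), (-1 : ℝ) ^ I.card * ∏ i ∈ I, p i

/-- Cluster-expansion polynomial `Y_S`. -/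
def Yf {n : ℕ} (G : SimpleGraph (Fin n)) [DecidableRel G.Adj] (y : Fin n → ℝ)
    (S : Finset (Fin n)) : ℝ :=
  ∑ I ∈ S.powerset.filter (fun I => Indep G I), ∏ i ∈ I, y i

/-! The ratio `r(S) = q̆_S / Y_{S^c}` is monotone in `S`, by strong induction on `S`. To compare
`r(S ∖ a)` with `r(S)`, combine the deletion recursions
`q̆_S = q̆_{S∖a} - p_a q̆_{S∖Γ⁺(a)}` and `Y_{(S∖a)^c} = Y_{S^c} + y_a Y_{S^c ∖ Γ(a)}` with the
induction hypothesis `r(S ∖ Γ⁺(a)) ≤ r(S ∖ a)`; what remains is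
`p_a Y_{(S∖Γ⁺(a))^c} ≤ y_a Y_{S^c ∖ Γ(a)}`, which follows from the cluster condition since
`(S∖Γ⁺(a))^c ⊆ Γ⁺(a) ∪ (S^c ∖ Γ(a))` and `Y` is submultiplicative over unions.
Positivity of `q̆_S` follows from `r(S) ≥ r(∅) = 1 / Y_{[n]} > 0`. -/

theorem Indep.mono {n : ℕ} {G : SimpleGraph (Fin n)} {I J : Finset (Fin n)} (hI : Indep G I)
    (hJ : J ⊆ I) : Indep G J :=
  fun i hi j hj => hI i (hJ hi) j (hJ hj)

section
variable {n : ℕ} (G : SimpleGraph (Fin n)) [DecidableRel G.Adj]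

theorem indep_insert_iff {a : Fin n} {I : Finset (Fin n)} :
    Indep G (insert a I) ↔ Indep G I ∧ Disjoint I (G.neighborFinset a) := by
  simp only [Indep, mem_insert, forall_eq_or_imp, G.irrefl, not_false_eq_true, true_and,
    disjoint_right, SimpleGraph.mem_neighborFinset]
  constructor
  · rintro ⟨haI, hI⟩
    exact ⟨fun i hi j hj => (hI i hi).2 j hj, fun j hj hjI => haI j hjI hj⟩
  · rintro ⟨hI, hdisj⟩
    exact ⟨fun j hj hadj => hdisj hadj hj, fun i hi => ⟨fun hadj => hdisj hadj.symm hi, hI i hi⟩⟩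

theorem Yf_insert (y : Fin n → ℝ) {a : Fin n} {T : Finset (Fin n)} (ha : a ∉ T) :
    Yf G y (insert a T) = Yf G y T + y a * Yf G y (T \ G.neighborFinset a) := by
  have powerset_sdiff : (T \ G.neighborFinset a).powerset =
      T.powerset.filter (Disjoint · (G.neighborFinset a)) := by
    ext I; simp [subset_sdiff]
  simp only [Yf, sum_filter, sum_powerset_insert ha, powerset_sdiff, mul_sum]
  congr 1
  refine sum_congr rfl fun I hI => ?_
  have haI : a ∉ I := fun h => ha (mem_powerset.1 hI h)
  simp only [indep_insert_iff G, prod_insert haI]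
  by_cases h1 : Indep G I <;> by_cases h2 : Disjoint I (G.neighborFinset a) <;> simp [h1, h2]

theorem Yf_pos {y : Fin n → ℝ} (hy : ∀ i, 0 < y i) (S : Finset (Fin n)) : 0 < Yf G y S :=
  sum_pos' (fun _ _ => prod_nonneg fun i _ => (hy i).le)
    ⟨∅, mem_filter.2 ⟨empty_mem_powerset S, by simp [Indep]⟩, by simp⟩

theorem Yf_mono {y : Fin n → ℝ} (hy : ∀ i, 0 ≤ y i) {S T : Finset (Fin n)} (h : S ⊆ T) :
    Yf G y S ≤ Yf G y T :=
  sum_le_sum_of_subset_of_nonneg (filter_subset_filter _ (powerset_mono.2 h))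
    fun _ _ _ => prod_nonneg fun i _ => hy i

theorem Yf_union_le_mul {y : Fin n → ℝ} (hy : ∀ i, 0 ≤ y i) (A B : Finset (Fin n)) :
    Yf G y (A ∪ B) ≤ Yf G y A * Yf G y B := by
  set split := fun I : Finset (Fin n) => (I ∩ A, I \ A)
  have split_injective : Function.Injective split := fun I J h => by
    rw [← sdiff_union_inter I A, ← sdiff_union_inter J A]
    simp_all [split]
  rw [Yf, Yf, Yf, sum_mul_sum, ← sum_product']
  calc ∑ I ∈ (A ∪ B).powerset.filter (Indep G), ∏ i ∈ I, y i
      = ∑ P ∈ ((A ∪ B).powerset.filter (Indep G)).image split,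
          (∏ i ∈ P.1, y i) * ∏ i ∈ P.2, y i := by
        rw [sum_image split_injective.injOn]
        exact sum_congr rfl fun I _ => (prod_inter_mul_prod_sdiff I A y).symm
    _ ≤ ∑ P ∈ (A.powerset.filter (Indep G)) ×ˢ (B.powerset.filter (Indep G)),
          (∏ i ∈ P.1, y i) * ∏ i ∈ P.2, y i := by
        refine sum_le_sum_of_subset_of_nonneg (image_subset_iff.2 fun I hI => ?_)
          fun P _ _ => mul_nonneg (prod_nonneg fun i _ => hy i) (prod_nonneg fun i _ => hy i)
        obtain ⟨hIAB, hI⟩ := mem_filter.1 hI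
        simp only [split, mem_product, mem_filter, mem_powerset]
        exact ⟨⟨inter_subset_right, hI.mono inter_subset_left⟩,
          ⟨sdiff_le_iff.2 (mem_powerset.1 hIAB), hI.mono sdiff_subset⟩⟩

theorem qb_eq_Yf_neg (p : Fin n → ℝ) (S : Finset (Fin n)) : qb G p S = Yf G (-p) S := by
  refine sum_congr rfl fun I _ => ?_
  simp [prod_neg]

theorem qb_empty (p : Fin n → ℝ) : qb G p ∅ = 1 := by
  rw [qb, powerset_empty, filter_singleton, if_pos (by simp [Indep])]
  simp

theorem sdiff_Gp (S : Finset (Fin n)) (a : Fin n) :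
    S \ Gp G a = S.erase a \ G.neighborFinset a := by
  ext x
  simp only [Gp, mem_sdiff, mem_insert, mem_erase]
  tauto

theorem qb_eq_qb_erase_sub (p : Fin n → ℝ) {S : Finset (Fin n)} {a : Fin n} (ha : a ∈ S) :
    qb G p S = qb G p (S.erase a) - p a * qb G p (S \ Gp G a) := by
  rw [qb_eq_Yf_neg, qb_eq_Yf_neg, qb_eq_Yf_neg, ← insert_erase ha,
    Yf_insert G _ (notMem_erase a S), insert_erase ha, sdiff_Gp]
  simp [sub_eq_add_neg]

noncomputable def shearerRatio (p y : Fin n → ℝ) (S : Finset (Fin n)) : ℝ :=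
  qb G p S / Yf G y (univ \ S)

variable {p y : Fin n → ℝ}

theorem Yf_compl_add_le_Yf_compl_erase (hy : ∀ i, 0 < y i)
    (hcl : ∀ i, p i ≤ y i / Yf G y (Gp G i)) {S : Finset (Fin n)} {a : Fin n} (ha : a ∈ S) :
    Yf G y (univ \ S) + p a * Yf G y (univ \ (S \ Gp G a)) ≤ Yf G y (univ \ S.erase a) := by
  set Z := Yf G y ((univ \ S) \ G.neighborFinset a)
  have hrec : Yf G y (univ \ S.erase a) = Yf G y (univ \ S) + y a * Z := by
    rw [sdiff_erase (mem_univ a), Yf_insert G y (by simp [ha])]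
  have hcover : univ \ (S \ Gp G a) ⊆ Gp G a ∪ (univ \ S) \ G.neighborFinset a := by
    intro x
    simp only [Gp, mem_sdiff, mem_univ, true_and, mem_union, mem_insert,
      SimpleGraph.mem_neighborFinset]
    tauto
  have hsplit : Yf G y (univ \ (S \ Gp G a)) ≤ Yf G y (Gp G a) * Z :=
    (Yf_mono G (fun i => (hy i).le) hcover).trans (Yf_union_le_mul G (fun i => (hy i).le) _ _)
  have hGp := Yf_pos G hy (Gp G a)
  have hbound : p a * Yf G y (univ \ (S \ Gp G a)) ≤ y a * Z :=
    calc p a * Yf G y (univ \ (S \ Gp G a))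
        ≤ y a / Yf G y (Gp G a) * (Yf G y (Gp G a) * Z) :=
          mul_le_mul (hcl a) hsplit (Yf_pos G hy _).le (div_pos (hy a) hGp).le
      _ = y a * Z := by field_simp
  linarith

theorem shearerRatio_empty_pos (hy : ∀ i, 0 < y i) : 0 < shearerRatio G p y ∅ := by
  rw [shearerRatio, qb_empty]
  exact div_pos one_pos (Yf_pos G hy _)

theorem shearerRatio_erase_le (hp : ∀ i, 0 ≤ p i) (hy : ∀ i, 0 < y i)
    (hcl : ∀ i, p i ≤ y i / Yf G y (Gp G i)) {S : Finset (Fin n)} {a : Fin n} (ha : a ∈ S)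
    (hmono : ∀ U ⊆ S.erase a, shearerRatio G p y U ≤ shearerRatio G p y (S.erase a)) :
    shearerRatio G p y (S.erase a) ≤ shearerRatio G p y S := by
  set T := S.erase a
  set U := S \ Gp G a
  set ρ := shearerRatio G p y T
  have hρ : 0 ≤ ρ := (shearerRatio_empty_pos G hy).le.trans (hmono ∅ (empty_subset T))
  have hT : qb G p T = ρ * Yf G y (univ \ T) := (div_mul_cancel₀ _ (Yf_pos G hy _).ne').symm
  have hU : qb G p U ≤ ρ * Yf G y (univ \ U) :=
    (div_le_iff₀ (Yf_pos G hy _)).1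
      (hmono U ((sdiff_Gp G S a).trans_subset sdiff_subset))
  have hY := Yf_compl_add_le_Yf_compl_erase G hy hcl ha
  rw [shearerRatio, le_div_iff₀ (Yf_pos G hy _)]
  calc ρ * Yf G y (univ \ S)
      ≤ ρ * (Yf G y (univ \ T) - p a * Yf G y (univ \ U)) :=
        mul_le_mul_of_nonneg_left (by linarith) hρ
    _ = qb G p T - p a * (ρ * Yf G y (univ \ U)) := by rw [hT]; ring
    _ ≤ qb G p T - p a * qb G p U := by gcongr; exact hp a
    _ = qb G p S := (qb_eq_qb_erase_sub G p ha).symm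

theorem shearerRatio_mono (hp : ∀ i, 0 ≤ p i) (hy : ∀ i, 0 < y i)
    (hcl : ∀ i, p i ≤ y i / Yf G y (Gp G i)) {S T : Finset (Fin n)} (h : T ⊆ S) :
    shearerRatio G p y T ≤ shearerRatio G p y S := by
  induction S using Finset.strongInduction generalizing T with
  | H S ih =>
    obtain rfl | hTS := eq_or_ssubset_of_subset h
    · rfl
    obtain ⟨a, haS, haT⟩ := exists_of_ssubset hTS
    calc shearerRatio G p y T ≤ shearerRatio G p y (S.erase a) :=
          ih _ (erase_ssubset haS) (subset_erase.2 ⟨h, haT⟩)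
      _ ≤ shearerRatio G p y S :=
          shearerRatio_erase_le G hp hy hcl haS fun U hU => ih _ (erase_ssubset haS) hU

theorem qb_pos (hp : ∀ i, 0 ≤ p i) (hy : ∀ i, 0 < y i)
    (hcl : ∀ i, p i ≤ y i / Yf G y (Gp G i)) (S : Finset (Fin n)) : 0 < qb G p S :=
  (div_pos_iff_of_pos_right (Yf_pos G hy _)).1
    ((shearerRatio_empty_pos G hy).trans_le (shearerRatio_mono G hp hy hcl (empty_subset S)))

end

theorem cluster_implies_shearer {n : ℕ} (G : SimpleGraph (Fin n)) [DecidableRel G.Adj]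
    (p y : Fin n → ℝ) (hp : ∀ i, 0 < p i) (hy : ∀ i, 0 < y i)
    (hcl : ∀ i, p i ≤ y i / Yf G y (Gp G i)) :
    (∀ S : Finset (Fin n), ∀ a ∈ S,
      qb G p S / qb G p (S.erase a) ≥
        Yf G y (Finset.univ \ S) / Yf G y (Finset.univ \ S.erase a)) ∧
    (∀ S : Finset (Fin n), 0 < qb G p S) := by
  have hp' : ∀ i, 0 ≤ p i := fun i => (hp i).le
  refine ⟨fun S a ha => ?_, qb_pos G hp' hy hcl⟩
  have h := shearerRatio_mono G hp' hy hcl (erase_subset a S)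
  rw [shearerRatio, shearerRatio, div_le_div_iff₀ (Yf_pos G hy _) (Yf_pos G hy _)] at h
  rw [ge_iff_le, div_le_div_iff₀ (Yf_pos G hy _) (qb_pos G hp' hy hcl _)]
  linarith
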